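/- arXiv:1702.05812 — 2 statements merged into one kernel-verified Lean document; each statement's English description precedes it below -/
import Mathlib

section
/- The total collateral cost of a Lightning linked payment of amount X over ℓ channels, defined as the sum over channels i of X times the locktime (T_i - T_start), where T_i = T_recv + (ℓ-1-i)·Δ, equals X·(ℓ-1)·(T_recv - T_start) + X·Δ·(ℓ-1)·(ℓ-2)/2, which is Θ(ℓ²·X·Δ) when T_recv - T_start = Θ(ℓ·Δ). -/
open Finset in
lemma aux_sum (n : ℕ) : ∑ i ∈ Finset.Icc 1 n, (n - i) = ∑ j ∈ Finset.range n, j := by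
  apply Finset.sum_nbij' (fun i => n - i) (fun j => n - j)
  · intro a ha; simp at ha ⊢; omega
  · intro a ha; simp at ha ⊢; omega
  · intro a ha; simp at ha ⊢; omega
  · intro a ha; simp at ha ⊢; omega
  · intro a ha; rfl

open Finset in
/-- Total collateral cost of a Lightning linked payment over ℓ channels with
deadlines `T i = T_recv + (ℓ-1-i)·Δ`. -/
theorem lightning_collateral_cost (ℓ : ℕ) (hℓ : 2 ≤ ℓ) (X Δ T_start T_recv : ℝ)
    (hX : 0 < X) (hΔ : 0 < Δ) :
    ∑ i ∈ Finset.Icc 1 (ℓ - 1),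
        X * ((T_recv + ((ℓ - 1 - i : ℕ) : ℝ) * Δ) - T_start)
      = X * ((ℓ - 1 : ℕ) : ℝ) * (T_recv - T_start)
        + X * Δ * ((ℓ - 1 : ℕ) : ℝ) * ((ℓ - 2 : ℕ) : ℝ) / 2 := by
  set n := ℓ - 1 with hn
  have key : ((∑ i ∈ Finset.Icc 1 n, (n - i) : ℕ) : ℝ) * 2 = (n : ℝ) * ((ℓ - 2 : ℕ) : ℝ) := by
    rw [aux_sum]
    have h2 : (∑ j ∈ Finset.range n, j) * 2 = n * (n - 1) := Finset.sum_range_id_mul_two n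
    have : ((∑ j ∈ Finset.range n, j : ℕ) : ℝ) * 2 = ((n * (n-1) : ℕ) : ℝ) := by
      exact_mod_cast congrArg (Nat.cast : ℕ → ℝ) h2
    rw [this]
    have : ℓ - 2 = n - 1 := by omega
    rw [this]
    push_cast [Nat.cast_sub (by omega : 1 ≤ n)]
    ring
  have expand : ∀ i ∈ Finset.Icc 1 n,
      X * ((T_recv + ((n - i : ℕ) : ℝ) * Δ) - T_start)
      = X * (T_recv - T_start) + X * Δ * ((n - i : ℕ) : ℝ) := by
    intro i _; ring
  rw [Finset.sum_congr rfl expand, Finset.sum_add_distrib, Finset.sum_const,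
    Nat.card_Icc, ← Finset.mul_sum, ← Nat.cast_sum]
  have hcard : (n + 1 - 1) = n := by omega
  rw [hcard]
  have : X * Δ * ((∑ i ∈ Finset.Icc 1 n, (n - i) : ℕ) : ℝ)
      = X * Δ * ((n : ℝ) * ((ℓ - 2 : ℕ) : ℝ)) / 2 := by
    rw [← key]; ring
  rw [this]; push_cast; ring
end

section
/- In Contract_State, at most one dispute can be pending for any given round: along any execution, between a dispute(r) transition and its resolution (via evidence or resolve), no dispute(r') transition can fire; and after resolution, any subsequent dispute must have round number strictly greater than r. -/
structure CState where
  best : ℤ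
  ok : Bool
  applied : List ℤ

inductive CAct | evidence (r : ℤ) | dispute (r : ℤ) | resolve (r : ℤ)

inductive CStep : CState → CAct → CState → Prop
  | evidence (s : CState) (r : ℤ) (h : s.best < r) :
      CStep s (CAct.evidence r) ⟨r, true, s.applied ++ [r]⟩
  | dispute (s : CState) (r : ℤ) (h : r = s.best + 1) (hok : s.ok = true) :
      CStep s (CAct.dispute r) ⟨s.best, false, s.applied⟩
  | resolve (s : CState) (r : ℤ) (h : r = s.best + 1) (hok : s.ok = false) :
      CStep s (CAct.resolve r) ⟨s.best + 1, true, s.applied⟩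

inductive CExec : CState → CState → Prop
  | refl (s : CState) : CExec s s
  | step (s t u : CState) (a : CAct) (h : CExec s t) (h' : CStep t a u) : CExec s u

lemma cstep_best_mono {t u : CState} {a : CAct} (h : CStep t a u) : t.best ≤ u.best := by
  cases h <;> simp <;> omega

lemma cexec_best_mono {t u : CState} (h : CExec t u) : t.best ≤ u.best := by
  induction h with
  | refl => exact le_refl _
  | step t' u' a h h' ih => exact le_trans ih (cstep_best_mono h')

lemma cexec_ok_lt {t u : CState} (h : CExec t u) :
    t.ok = false → u.ok = true → t.best < u.best := by
  induction h with
  | refl => intro h1 h2; rw [h1] at h2; exact absurd h2 (by simp)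
  | step t' u' a h h' ih =>
    intro hf ht
    cases h' with
    | evidence r hr => exact lt_of_le_of_lt (cexec_best_mono h) hr
    | dispute r hr hok => simp_all
    | resolve r hr hok =>
      have := cexec_best_mono h
      simp only at *; omega

/-- At most one pending dispute per round: while a dispute is pending (flag =
DISPUTE, i.e. `ok = false`) no further `dispute` transition can fire; and any
dispute occurring after a dispute for round `r` (once it is resolved) has round
number strictly greater than `r`. -/
theorem contract_state_dispute_unique :
    (∀ (s s' : CState) (r' : ℤ), s.ok = false → ¬ CStep s (CAct.dispute r') s') ∧
    (∀ (s s₁ s₂ s₃ : CState) (r r₂ : ℤ),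
      CStep s (CAct.dispute r) s₁ → CExec s₁ s₂ →
      CStep s₂ (CAct.dispute r₂) s₃ → r < r₂) := by
  constructor
  · intro s s' r' hf h
    cases h with
    | dispute _ _ hok => rw [hf] at hok; exact absurd hok (by simp)
  · intro s s₁ s₂ s₃ r r₂ h1 hex h2
    cases h1 with
    | dispute _ hr _ =>
      cases h2 with
      | dispute _ hr2 hok2 =>
        have := cexec_ok_lt hex rfl hok2
        simp only at this; omega
end
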